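/- For every nonzero z = |z|(cos \alpha, sin \alpha) in R^2 and every k > 0, \int_0^{2\pi} cos(\theta) e^{i k |z| cos(\theta - \alpha)} d\theta = 2\pi i cos(\alpha) J_1(k|z|), where J_1 is the Bessel function of the first kind of order 1. -/

import Mathlib

/-!
Translating `θ` by `α` (the integrand is `2π`-periodic) and expanding `cos (θ + α)` leaves
`cos α ∫ cos θ e^{iρ cos θ} - sin α ∫ sin θ e^{iρ cos θ}` with `ρ = k‖z‖`; the second integral
vanishes by the symmetry `θ ↦ 2π - θ`. In the first, expand the exponential and integrate termwise
(dominated convergence): the term of order `n` is `(iρ)ⁿ/n! ∫₀^{2π} cos^{n+1}`, which vanishes for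
even `n`, while for `n = 2m + 1` the Wallis formula `∫₀^{2π} cos^{2j} = 2π (2j)!/(4^j (j!)²)` turns
it into `2πi` times the `m`-th term of the power series of `J₁(ρ)`.
-/

open Real MeasureTheory

/-- Bessel function of the first kind of order 1. -/
noncomputable def besselJ1 (t : ℝ) : ℝ :=
  ∑' p : ℕ, (-1 : ℝ)^p / ((Nat.factorial p : ℝ) * (Nat.factorial (1 + p) : ℝ)) * (t/2)^(1 + 2*p)

open Complex Nat

lemma integral_cos_pow_add_two_zero_two_pi (n : ℕ) :
    ∫ x in (0 : ℝ)..2 * π, Real.cos x ^ (n + 2) =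
      (n + 1) / (n + 2) * ∫ x in (0 : ℝ)..2 * π, Real.cos x ^ n := by
  simp [integral_cos_pow]

lemma integral_cos_pow_odd_zero_two_pi (m : ℕ) :
    ∫ x in (0 : ℝ)..2 * π, Real.cos x ^ (2 * m + 1) = 0 := by
  induction m with
  | zero => simp
  | succ m ih => rw [show 2 * (m + 1) + 1 = 2 * m + 1 + 2 by ring,
      integral_cos_pow_add_two_zero_two_pi, ih, mul_zero]

lemma integral_cos_pow_even_zero_two_pi (m : ℕ) :
    ∫ x in (0 : ℝ)..2 * π, Real.cos x ^ (2 * m) = 2 * π * (2 * m)! / (4 ^ m * (m ! : ℝ) ^ 2) := by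
  induction m with
  | zero => simp
  | succ m ih =>
    rw [show 2 * (m + 1) = 2 * m + 2 by ring, integral_cos_pow_add_two_zero_two_pi, ih]
    push_cast [factorial_succ]
    field_simp
    ring

lemma integral_sin_mul_comp_cos_zero_two_pi (g : ℝ → ℂ) :
    ∫ x in (0 : ℝ)..2 * π, (Real.sin x : ℂ) * g (Real.cos x) = 0 := by
  have h := intervalIntegral.integral_comp_sub_left
    (fun x => (Real.sin x : ℂ) * g (Real.cos x)) (a := 0) (b := 2 * π) (2 * π)
  simp only [Real.sin_two_pi_sub, Real.cos_two_pi_sub, ofReal_neg, neg_mul,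
    intervalIntegral.integral_neg, sub_zero, sub_self] at h
  linear_combination -h / 2

noncomputable def besselJ1Term (m : ℕ) (t : ℝ) : ℝ :=
  (-1) ^ m / ((m ! : ℝ) * ((1 + m)! : ℝ)) * (t / 2) ^ (1 + 2 * m)

lemma besselJ1_eq_tsum (t : ℝ) : besselJ1 t = ∑' m, besselJ1Term m t := rfl

noncomputable def cosExpIntegralTerm (ρ : ℝ) (n : ℕ) : ℂ :=
  (I * ρ) ^ n / n ! * ((∫ x in (0 : ℝ)..2 * π, Real.cos x ^ (n + 1) : ℝ) : ℂ)

lemma cosExpIntegralTerm_even (ρ : ℝ) (m : ℕ) : cosExpIntegralTerm ρ (2 * m) = 0 := by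
  simp [cosExpIntegralTerm, integral_cos_pow_odd_zero_two_pi]

lemma cosExpIntegralTerm_odd (ρ : ℝ) (m : ℕ) :
    cosExpIntegralTerm ρ (2 * m + 1) = 2 * π * I * besselJ1Term m ρ := by
  have hI : I ^ (2 * m + 1) = (-1) ^ m * I := by rw [pow_succ, pow_mul, I_sq]
  have h2 : (2 : ℂ) ^ (1 + 2 * m) = 2 * 4 ^ m := by rw [pow_add, pow_mul]; norm_num
  have h2m : ((2 * m)! : ℂ) ≠ 0 := mod_cast factorial_ne_zero _
  have hm : (m ! : ℂ) ≠ 0 := mod_cast factorial_ne_zero _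
  have h2m1 : (2 * m + 1 : ℂ) ≠ 0 := mod_cast (2 * m).succ_ne_zero
  rw [cosExpIntegralTerm, besselJ1Term, show 2 * m + 1 + 1 = 2 * (m + 1) by ring,
    integral_cos_pow_even_zero_two_pi, mul_pow, hI, show 2 * (m + 1) = 2 * m + 1 + 1 by ring,
    add_comm 1 m]
  push_cast [factorial_succ, div_pow, h2]
  field_simp
  ring

lemma hasSum_cosExpIntegralTerm (ρ : ℝ) :
    HasSum (cosExpIntegralTerm ρ)
      (∫ x in (0 : ℝ)..2 * π, (Real.cos x : ℂ) * exp (I * (ρ * Real.cos x))) := by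
  have hterm (n : ℕ) : cosExpIntegralTerm ρ n
      = ∫ x in (0 : ℝ)..2 * π, (I * ρ) ^ n / n ! * (Real.cos x : ℂ) ^ (n + 1) := by
    rw [cosExpIntegralTerm, intervalIntegral.integral_const_mul, ← intervalIntegral.integral_ofReal]
    push_cast; rfl
  simp_rw [funext hterm]
  refine intervalIntegral.hasSum_integral_of_dominated_convergence (fun n _ => |ρ| ^ n / n !)
    (fun n => by fun_prop) (fun n => .of_forall fun x _ => ?_)
    (.of_forall fun _ _ => Real.summable_pow_div_factorial _) intervalIntegrable_const
    (.of_forall fun x _ => ?_)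
  · have hcos : ‖(Real.cos x : ℂ)‖ ^ (n + 1) ≤ 1 :=
      pow_le_one₀ (norm_nonneg _) (by rw [Complex.norm_real]; exact Real.abs_cos_le_one x)
    simpa [norm_pow, norm_mul] using mul_le_of_le_one_right (by positivity) hcos
  · have h := (NormedSpace.expSeries_div_hasSum_exp (I * (ρ * Real.cos x))).mul_left
      (Real.cos x : ℂ)
    rw [← exp_eq_exp_ℂ] at h
    exact h.congr_fun fun n => by ring

lemma integral_cos_mul_exp_I_mul_cos (ρ : ℝ) :
    ∫ x in (0 : ℝ)..2 * π, (Real.cos x : ℂ) * exp (I * (ρ * Real.cos x)) =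
      2 * π * I * besselJ1 ρ := by
  have hinj : Function.Injective (fun m : ℕ => 2 * m + 1) := fun a b h => by simpa using h
  have hzero (n : ℕ) (hn : n ∉ Set.range (fun m : ℕ => 2 * m + 1)) :
      cosExpIntegralTerm ρ n = 0 := by
    obtain ⟨m, rfl | rfl⟩ := n.even_or_odd'
    · exact cosExpIntegralTerm_even ρ m
    · exact absurd ⟨m, rfl⟩ hn
  have hodd := (hinj.hasSum_iff hzero).2 (hasSum_cosExpIntegralTerm ρ)
  simp only [Function.comp_def, cosExpIntegralTerm_odd] at hodd
  rw [← hodd.tsum_eq, tsum_mul_left, besselJ1_eq_tsum, ofReal_tsum]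

lemma integral_cos_mul_exp_I_mul_cos_sub (ρ α : ℝ) :
    ∫ θ in (0 : ℝ)..2 * π, (Real.cos θ : ℂ) * exp (I * (ρ * Real.cos (θ - α))) =
      2 * π * I * Real.cos α * besselJ1 ρ := by
  set f : ℝ → ℂ := fun θ => Real.cos θ * exp (I * (ρ * Real.cos (θ - α)))
  have hper : Function.Periodic f (2 * π) := fun θ => by
    simp only [f, Real.cos_add_two_pi, add_sub_right_comm]
  have hshift : ∫ θ in (0 : ℝ)..2 * π, f θ = ∫ x in (0 : ℝ)..2 * π, f (x + α) := by
    rw [intervalIntegral.integral_comp_add_right, zero_add, add_comm _ α,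
      ← hper.intervalIntegral_add_eq 0 α, zero_add]
  have hexpand (x : ℝ) : f (x + α) =
      Real.cos α * (Real.cos x * exp (I * (ρ * Real.cos x))) -
        Real.sin α * (Real.sin x * exp (I * (ρ * Real.cos x))) := by
    simp only [f, add_sub_cancel_right, Real.cos_add]
    push_cast
    ring
  rw [hshift, intervalIntegral.integral_congr fun x _ => hexpand x, intervalIntegral.integral_sub
      (by apply Continuous.intervalIntegrable; fun_prop)
      (by apply Continuous.intervalIntegrable; fun_prop),
    intervalIntegral.integral_const_mul, intervalIntegral.integral_const_mul,
    integral_cos_mul_exp_I_mul_cos,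
    integral_sin_mul_comp_cos_zero_two_pi fun c => exp (I * (ρ * c))]
  ring

theorem circle_integral_cos_exp_general (z : ℝ × ℝ) (α k : ℝ) :
    ∫ θ in (0:ℝ)..(2*π),
        (Real.cos θ : ℂ) * Complex.exp (Complex.I * (k * ‖z‖ * Real.cos (θ - α)))
      = 2 * π * Complex.I * (Real.cos α : ℂ) * (besselJ1 (k * ‖z‖) : ℝ) := by
  simpa using integral_cos_mul_exp_I_mul_cos_sub (k * ‖z‖) α

theorem circle_integral_cos_exp (z : ℝ × ℝ) (hz : z ≠ 0) (α k : ℝ) (hk : 0 < k)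
    (hzα : z = (‖z‖ * Real.cos α, ‖z‖ * Real.sin α)) :
    ∫ θ in (0:ℝ)..(2*π),
        (Real.cos θ : ℂ) * Complex.exp (Complex.I * (k * ‖z‖ * Real.cos (θ - α)))
      = 2 * π * Complex.I * (Real.cos α : ℂ) * (besselJ1 (k * ‖z‖) : ℝ) :=
  circle_integral_cos_exp_general z α k
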